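/- arXiv:2301.13780 — 5 statements merged into one kernel-verified Lean document; each statement's English description precedes it below -/
import Mathlib

section
/- In the type theory with commuting focuses, single-variable weakening is admissible: if the judgment Γ, Γ' ⊢ 𝒥 is derivable and Γ, w :_♣ W, Γ' is a well-formed context, then Γ, w :_♣ W, Γ' ⊢ 𝒥 is derivable; moreover, the weakened judgment has a derivation tree of the same size as the original one. -/
/-!
A deep embedding of the "type theory with commuting focuses".

Focuses are the elements of a meet-semilattice `F` with a top element
(equivalently, a commutative idempotent monoid with `♥♣ = ♥ ⊓ ♣`).
-/

universe u

/-- Raw expressions (serving both as types and terms) of the type theory with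
commuting focuses, over a type `F` of focuses, with named variables. -/
inductive Expr (F : Type u) : Type u
  | var : String → Expr F
  /-- the type `♭_♥ A` -/
  | flat : F → Expr F → Expr F
  /-- the type `♯_♥ A` -/
  | sharp : F → Expr F → Expr F
  /-- the term `M^{♭_♥}` -/
  | flatIntro : F → Expr F → Expr F
  /-- the term `(let u^{♭_♥} := M in N)`; the variable `u` is bound in `N` -/
  | flatElim : F → String → Expr F → Expr F → Expr F
  /-- the term `M^{♯_♥}` -/
  | sharpIntro : F → Expr F → Expr F
  /-- the term `N_{♯_♥}` -/
  | sharpElim : F → Expr F → Expr F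

/-- (Naive, capture-permitting) substitution `e[s/x]`. -/
def Expr.subst {F : Type u} : Expr F → String → Expr F → Expr F
  | .var y, x, s => if y = x then s else .var y
  | .flat h A, x, s => .flat h (A.subst x s)
  | .sharp h A, x, s => .sharp h (A.subst x s)
  | .flatIntro h M, x, s => .flatIntro h (M.subst x s)
  | .flatElim h u M N, x, s =>
      .flatElim h u (M.subst x s) (if u = x then N else N.subst x s)
  | .sharpIntro h M, x, s => .sharpIntro h (M.subst x s)
  | .sharpElim h M, x, s => .sharpElim h (M.subst x s)

/-- A context is a list of focus-annotated declarations `x :_♥ A`.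
The head of the list is the *most recent* (rightmost) declaration, so the
paper's `Γ, x :_♥ A` is `(x, ♥, A) :: Γ` and `Γ, Γ'` is `Γ' ++ Γ`. -/
abbrev Ctx (F : Type u) := List (String × F × Expr F)

/-- Promotion `♥Γ`: replace each annotation `♣` in `Γ` by `♥♣ = ♥ ⊓ ♣`. -/
def Ctx.promote {F : Type u} [SemilatticeInf F] (h : F) (Γ : Ctx F) : Ctx F :=
  Γ.map (fun p => (p.1, h ⊓ p.2.1, p.2.2))

/-- Division `♥\Γ`: delete every declaration whose annotation `♣` does not
satisfy `♣ ≤ ♥`. -/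
def Ctx.divide {F : Type u} [SemilatticeInf F]
    [DecidableRel ((· ≤ ·) : F → F → Prop)] (h : F) (Γ : Ctx F) : Ctx F :=
  Γ.filter (fun p => decide (p.2.1 ≤ h))

/-- Substitution `Γ'[s/z]` into the types of a telescope. -/
def Ctx.substTele {F : Type u} (Γ' : Ctx F) (z : String) (s : Expr F) : Ctx F :=
  Γ'.map (fun p => (p.1, p.2.1, p.2.2.subst z s))

/-- Judgment forms `𝒥`: `A type`, `a : A`, and their judgmental equality forms. -/
inductive Judg (F : Type u) : Type u
  | isType : Expr F → Judg F
  | typed : Expr F → Expr F → Judg F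
  | eqType : Expr F → Expr F → Judg F
  | eqTerm : Expr F → Expr F → Expr F → Judg F

/-- Substitution `𝒥[s/z]` in a judgment. -/
def Judg.subst {F : Type u} : Judg F → String → Expr F → Judg F
  | .isType A, x, s => .isType (A.subst x s)
  | .typed a A, x, s => .typed (a.subst x s) (A.subst x s)
  | .eqType A B, x, s => .eqType (A.subst x s) (B.subst x s)
  | .eqTerm a b A, x, s => .eqTerm (a.subst x s) (b.subst x s) (A.subst x s)

section Rules

variable {F : Type u} [SemilatticeInf F] [OrderTop F]
  [DecidableRel ((· ≤ ·) : F → F → Prop)]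

/-- Derivations `Γ ⊢ 𝒥` of the type theory with commuting focuses.
This is `Type`-valued so that the *size* of a derivation tree can be measured. -/
inductive Derives : Ctx F → Judg F → Type u
  /-- var: if `x :_♥ A` occurs in the context then `x` has type `A` there. -/
  | var {Γ : Ctx F} {x : String} {h : F} {A : Expr F}
      (hmem : (x, h, A) ∈ Γ) :
      Derives Γ (.typed (.var x) A)
  /-- ♭-form: from `♥\Γ ⊢ A type` conclude `Γ ⊢ ♭_♥ A type`. -/
  | flatForm {Γ : Ctx F} {h : F} {A : Expr F} :
      Derives (Ctx.divide h Γ) (.isType A) →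
      Derives Γ (.isType (.flat h A))
  /-- ♭-intro: from `♥\Γ ⊢ M : A` conclude `Γ ⊢ M^{♭_♥} : ♭_♥ A`. -/
  | flatIntro {Γ : Ctx F} {h : F} {M A : Expr F} :
      Derives (Ctx.divide h Γ) (.typed M A) →
      Derives Γ (.typed (.flatIntro h M) (.flat h A))
  /-- ♭-elim: given `♣♥\Γ ⊢ A type`, `Γ, x :_♣ ♭_♥ A ⊢ C type`,
  `♣\Γ ⊢ M : ♭_♥ A` and `Γ, u :_{♣♥} A ⊢ N : C[u^{♭_♥}/x]`, conclude
  `Γ ⊢ (let u^{♭_♥} := M in N) : C[M/x]`. -/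
  | flatElim {Γ : Ctx F} {h c : F} {x u : String} {A C M N : Expr F} :
      Derives (Ctx.divide (c ⊓ h) Γ) (.isType A) →
      Derives ((x, c, Expr.flat h A) :: Γ) (.isType C) →
      Derives (Ctx.divide c Γ) (.typed M (.flat h A)) →
      Derives ((u, c ⊓ h, A) :: Γ)
        (.typed N (C.subst x (.flatIntro h (.var u)))) →
      Derives Γ (.typed (.flatElim h u M N) (C.subst x M))
  /-- ♭-beta: `(let u^{♭_♥} := K^{♭_♥} in N) ≡ N[K/u]`. -/
  | flatBeta {Γ : Ctx F} {h c : F} {x u : String} {A C K N : Expr F} :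
      Derives (Ctx.divide (c ⊓ h) Γ) (.isType A) →
      Derives ((x, c, Expr.flat h A) :: Γ) (.isType C) →
      Derives (Ctx.divide (c ⊓ h) Γ) (.typed K A) →
      Derives ((u, c ⊓ h, A) :: Γ)
        (.typed N (C.subst x (.flatIntro h (.var u)))) →
      Derives Γ (.eqTerm (.flatElim h u (.flatIntro h K) N) (N.subst u K)
        (C.subst x (.flatIntro h K)))
  /-- ♯-form: from `♥Γ ⊢ A type` conclude `Γ ⊢ ♯_♥ A type`. -/
  | sharpForm {Γ : Ctx F} {h : F} {A : Expr F} :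
      Derives (Ctx.promote h Γ) (.isType A) →
      Derives Γ (.isType (.sharp h A))
  /-- ♯-intro: from `♥Γ ⊢ M : A` conclude `Γ ⊢ M^{♯_♥} : ♯_♥ A`. -/
  | sharpIntro {Γ : Ctx F} {h : F} {M A : Expr F} :
      Derives (Ctx.promote h Γ) (.typed M A) →
      Derives Γ (.typed (.sharpIntro h M) (.sharp h A))
  /-- ♯-elim: from `♥\Γ ⊢ N : ♯_♥ A` conclude `Γ ⊢ N_{♯_♥} : A`. -/
  | sharpElim {Γ : Ctx F} {h : F} {N A : Expr F} :
      Derives (Ctx.divide h Γ) (.typed N (.sharp h A)) →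
      Derives Γ (.typed (.sharpElim h N) A)
  /-- ♯-beta: from `♥\Γ ⊢ M : A` conclude `Γ ⊢ (M^{♯_♥})_{♯_♥} ≡ M : A`. -/
  | sharpBeta {Γ : Ctx F} {h : F} {M A : Expr F} :
      Derives (Ctx.divide h Γ) (.typed M A) →
      Derives Γ (.eqTerm (.sharpElim h (.sharpIntro h M)) M A)
  /-- ♯-eta: from `Γ ⊢ N : ♯_♥ A` conclude `Γ ⊢ N ≡ (N_{♯_♥})^{♯_♥} : ♯_♥ A`. -/
  | sharpEta {Γ : Ctx F} {h : F} {N A : Expr F} :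
      Derives Γ (.typed N (.sharp h A)) →
      Derives Γ (.eqTerm N (.sharpIntro h (.sharpElim h N)) (.sharp h A))

/-- Well-formed contexts: ctx-empty and ctx-ext. -/
inductive CtxWF : Ctx F → Prop
  | empty : CtxWF ([] : Ctx F)
  /-- ctx-ext: if `♥\Γ ⊢ A type` then `Γ, x :_♥ A ctx`. -/
  | ext {Γ : Ctx F} {x : String} {h : F} {A : Expr F} :
      CtxWF Γ → Nonempty (Derives (Ctx.divide h Γ) (.isType A)) →
      CtxWF ((x, h, A) :: Γ)

/-- The size of a derivation tree. -/
def Derives.size : {Γ : Ctx F} → {J : Judg F} → Derives Γ J → ℕ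
  | _, _, .var _ => 1
  | _, _, .flatForm d => d.size + 1
  | _, _, .flatIntro d => d.size + 1
  | _, _, .flatElim d₁ d₂ d₃ d₄ => d₁.size + d₂.size + d₃.size + d₄.size + 1
  | _, _, .flatBeta d₁ d₂ d₃ d₄ => d₁.size + d₂.size + d₃.size + d₄.size + 1
  | _, _, .sharpForm d => d.size + 1
  | _, _, .sharpIntro d => d.size + 1
  | _, _, .sharpElim d => d.size + 1
  | _, _, .sharpBeta d => d.size + 1
  | _, _, .sharpEta d => d.size + 1

end Rules

section Weakening

variable {F : Type u} [SemilatticeInf F] [OrderTop F]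
  [DecidableRel ((· ≤ ·) : F → F → Prop)]

/-- Transport a derivation along an equality of contexts. -/
def Derives.cast {Γ Γ' : Ctx F} {J : Judg F} (e : Γ = Γ') (d : Derives Γ J) :
    Derives Γ' J := e ▸ d

@[simp] theorem Derives.size_cast {Γ Γ' : Ctx F} {J : Judg F} (e : Γ = Γ')
    (d : Derives Γ J) : (d.cast e).size = d.size := by subst e; rfl

theorem weaken_div {w : String} {W : Expr F} {f c : F} {Γ₁ Γ₂ : Ctx F}
    {Jp : Judg F} (dp : Derives (Ctx.divide f (Γ₂ ++ Γ₁)) Jp)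
    (ih : ∀ (Γ₁' Γ₂' : Ctx F) (c' : F), Ctx.divide f (Γ₂ ++ Γ₁) = Γ₂' ++ Γ₁' →
      ∃ d' : Derives (Γ₂' ++ (w, c', W) :: Γ₁') Jp, d'.size = dp.size) :
    ∃ d' : Derives (Ctx.divide f (Γ₂ ++ (w, c, W) :: Γ₁)) Jp,
      d'.size = dp.size := by
  by_cases hc : c ≤ f
  · obtain ⟨d', hd'⟩ := ih (Ctx.divide f Γ₁) (Ctx.divide f Γ₂) c
      (by simp [Ctx.divide, List.filter_append])
    exact ⟨d'.cast (by rw [Ctx.divide, Ctx.divide, Ctx.divide, List.filter_append, List.filter_cons_of_pos (by simpa using hc)]), by simp [hd']⟩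
  · exact ⟨dp.cast (by simp [Ctx.divide, List.filter_append, hc]), by simp⟩

theorem weaken_prom {w : String} {W : Expr F} {f c : F} {Γ₁ Γ₂ : Ctx F}
    {Jp : Judg F} (dp : Derives (Ctx.promote f (Γ₂ ++ Γ₁)) Jp)
    (ih : ∀ (Γ₁' Γ₂' : Ctx F) (c' : F), Ctx.promote f (Γ₂ ++ Γ₁) = Γ₂' ++ Γ₁' →
      ∃ d' : Derives (Γ₂' ++ (w, c', W) :: Γ₁') Jp, d'.size = dp.size) :
    ∃ d' : Derives (Ctx.promote f (Γ₂ ++ (w, c, W) :: Γ₁)) Jp,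
      d'.size = dp.size := by
  obtain ⟨d', hd'⟩ := ih (Ctx.promote f Γ₁) (Ctx.promote f Γ₂) (f ⊓ c)
    (by simp [Ctx.promote])
  exact ⟨d'.cast (by rw [Ctx.promote, Ctx.promote, Ctx.promote, List.map_append, List.map_cons]), by simp [hd']⟩

theorem weaken_cons {w x : String} {W A : Expr F} {f c : F} {Γ₁ Γ₂ : Ctx F}
    {Jp : Judg F} (dp : Derives ((x, f, A) :: (Γ₂ ++ Γ₁)) Jp)
    (ih : ∀ (Γ₁' Γ₂' : Ctx F) (c' : F),
        (x, f, A) :: (Γ₂ ++ Γ₁) = Γ₂' ++ Γ₁' →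
      ∃ d' : Derives (Γ₂' ++ (w, c', W) :: Γ₁') Jp, d'.size = dp.size) :
    ∃ d' : Derives ((x, f, A) :: (Γ₂ ++ (w, c, W) :: Γ₁)) Jp,
      d'.size = dp.size :=
  ih Γ₁ ((x, f, A) :: Γ₂) c rfl

theorem weaken_aux (w : String) (W : Expr F) :
    ∀ {Γ : Ctx F} {J : Judg F} (d : Derives Γ J) (Γ₁ Γ₂ : Ctx F) (c : F),
      Γ = Γ₂ ++ Γ₁ →
      ∃ d' : Derives (Γ₂ ++ (w, c, W) :: Γ₁) J, d'.size = d.size := by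
  intro Γ J d
  induction d with
  | @var Γ x f A hmem =>
    intro Γ₁ Γ₂ c hΓ; subst hΓ
    have hmem' : (x, f, A) ∈ Γ₂ ++ (w, c, W) :: Γ₁ := by
      simp only [List.mem_append, List.mem_cons] at hmem ⊢
      tauto
    exact ⟨.var hmem', rfl⟩
  | flatForm d ih =>
    intro Γ₁ Γ₂ c hΓ; subst hΓ
    obtain ⟨d', hd'⟩ := weaken_div d ih
    exact ⟨.flatForm d', by simp [Derives.size, hd']⟩
  | flatIntro d ih =>
    intro Γ₁ Γ₂ c hΓ; subst hΓ
    obtain ⟨d', hd'⟩ := weaken_div d ih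
    exact ⟨.flatIntro d', by simp [Derives.size, hd']⟩
  | flatElim d₁ d₂ d₃ d₄ ih₁ ih₂ ih₃ ih₄ =>
    intro Γ₁ Γ₂ c hΓ; subst hΓ
    obtain ⟨d₁', h₁⟩ := weaken_div d₁ ih₁
    obtain ⟨d₂', h₂⟩ := weaken_cons d₂ ih₂
    obtain ⟨d₃', h₃⟩ := weaken_div d₃ ih₃
    obtain ⟨d₄', h₄⟩ := weaken_cons d₄ ih₄
    exact ⟨.flatElim d₁' d₂' d₃' d₄', by simp [Derives.size, h₁, h₂, h₃, h₄]⟩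
  | flatBeta d₁ d₂ d₃ d₄ ih₁ ih₂ ih₃ ih₄ =>
    intro Γ₁ Γ₂ c hΓ; subst hΓ
    obtain ⟨d₁', h₁⟩ := weaken_div d₁ ih₁
    obtain ⟨d₂', h₂⟩ := weaken_cons d₂ ih₂
    obtain ⟨d₃', h₃⟩ := weaken_div d₃ ih₃
    obtain ⟨d₄', h₄⟩ := weaken_cons d₄ ih₄
    exact ⟨.flatBeta d₁' d₂' d₃' d₄', by simp [Derives.size, h₁, h₂, h₃, h₄]⟩
  | sharpForm d ih =>
    intro Γ₁ Γ₂ c hΓ; subst hΓ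
    obtain ⟨d', hd'⟩ := weaken_prom d ih
    exact ⟨.sharpForm d', by simp [Derives.size, hd']⟩
  | sharpIntro d ih =>
    intro Γ₁ Γ₂ c hΓ; subst hΓ
    obtain ⟨d', hd'⟩ := weaken_prom d ih
    exact ⟨.sharpIntro d', by simp [Derives.size, hd']⟩
  | sharpElim d ih =>
    intro Γ₁ Γ₂ c hΓ; subst hΓ
    obtain ⟨d', hd'⟩ := weaken_div d ih
    exact ⟨.sharpElim d', by simp [Derives.size, hd']⟩
  | sharpBeta d ih =>
    intro Γ₁ Γ₂ c hΓ; subst hΓ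
    obtain ⟨d', hd'⟩ := weaken_div d ih
    exact ⟨.sharpBeta d', by simp [Derives.size, hd']⟩
  | sharpEta d ih =>
    intro Γ₁ Γ₂ c hΓ; subst hΓ
    obtain ⟨d', hd'⟩ := ih Γ₁ Γ₂ c rfl
    exact ⟨.sharpEta d', by simp [Derives.size, hd']⟩

end Weakening

/-- **Weakening is admissible.**
If `Γ, Γ' ⊢ 𝒥` is derivable and `Γ, w :_♣ W, Γ'` is a well-formed context, then
`Γ, w :_♣ W, Γ' ⊢ 𝒥` is derivable, by a derivation tree of the same size. -/
theorem weakening_admissible {F : Type u} [SemilatticeInf F] [OrderTop F]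
    [DecidableRel ((· ≤ ·) : F → F → Prop)]
    (Γ Γ' : Ctx F) (w : String) (c : F) (W : Expr F) (J : Judg F)
    (d : Derives (Γ' ++ Γ) J)
    (hwf : CtxWF (Γ' ++ (w, c, W) :: Γ)) :
    ∃ d' : Derives (Γ' ++ (w, c, W) :: Γ) J, d'.size = d.size :=
  weaken_aux w W d Γ Γ' c rfl
end

section
/- In the type theory with commuting focuses, promotion is admissible: for every focus ♥, (promote-ctx) if Γ is a well-formed context then so is ♥Γ, and (promote) if Γ ⊢ 𝒥 is derivable then ♥Γ ⊢ 𝒥 is derivable. -/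
/-!
A deep embedding of the "type theory with commuting focuses".

Focuses are the elements of a meet-semilattice `F` with a top element
(equivalently, a commutative idempotent monoid with `♥♣ = ♥ ⊓ ♣`).
-/

universe u

set_option linter.unusedSectionVars false

section Aux

variable {F : Type u} [SemilatticeInf F] [OrderTop F]
  [DecidableRel ((· ≤ ·) : F → F → Prop)]

lemma mem_promote {h c : F} {Γ : Ctx F} {x : String} {A : Expr F}
    (hm : (x, c, A) ∈ Γ) : (x, h ⊓ c, A) ∈ Ctx.promote h Γ :=
  List.mem_map_of_mem (f := fun p : String × F × Expr F => (p.1, h ⊓ p.2.1, p.2.2)) hm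

lemma divide_sub {k : F} {Γ Δ : Ctx F} (hs : ∀ p, p ∈ Γ → p ∈ Δ) :
    ∀ p, p ∈ Ctx.divide k Γ → p ∈ Ctx.divide k Δ := by
  intro p hp
  simp only [Ctx.divide, List.mem_filter] at hp ⊢
  exact ⟨hs p hp.1, hp.2⟩

lemma promote_sub {h : F} {Γ Δ : Ctx F} (hs : ∀ p, p ∈ Γ → p ∈ Δ) :
    ∀ p, p ∈ Ctx.promote h Γ → p ∈ Ctx.promote h Δ := by
  intro p hp
  simp only [Ctx.promote, List.mem_map] at hp ⊢
  obtain ⟨q, hq, rfl⟩ := hp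
  exact ⟨q, hs q hq, rfl⟩

lemma cons_sub {p₀ : String × F × Expr F} {Γ Δ : Ctx F}
    (hs : ∀ p, p ∈ Γ → p ∈ Δ) :
    ∀ p, p ∈ p₀ :: Γ → p ∈ p₀ :: Δ := by
  intro p hp
  rcases List.mem_cons.1 hp with h | h
  · exact List.mem_cons.2 (Or.inl h)
  · exact List.mem_cons.2 (Or.inr (hs p h))

/-- `♥(♣\Γ)` is contained in `k'\(♥Γ)` whenever `♥ ⊓ ♣ ≤ k'`. -/
lemma promote_divide_sub {h k k' : F} (hk : h ⊓ k ≤ k') {Γ : Ctx F} :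
    ∀ p, p ∈ Ctx.promote h (Ctx.divide k Γ) → p ∈ Ctx.divide k' (Ctx.promote h Γ) := by
  intro p hp
  simp only [Ctx.promote, Ctx.divide, List.mem_map, List.mem_filter,
    decide_eq_true_eq] at hp ⊢
  obtain ⟨q, ⟨hq, hle⟩, rfl⟩ := hp
  exact ⟨⟨q, hq, rfl⟩, le_trans (inf_le_inf_left h hle) hk⟩

lemma promote_promote (h k : F) (Γ : Ctx F) :
    Ctx.promote h (Ctx.promote k Γ) = Ctx.promote k (Ctx.promote h Γ) := by
  simp only [Ctx.promote, List.map_map]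
  apply List.map_congr_left
  intro p _
  simp [Function.comp, inf_left_comm]

/-- Derivability is monotone under (set-theoretic) context inclusion. -/
theorem Derives.mono {Γ : Ctx F} {J : Judg F} (d : Derives Γ J) :
    ∀ Δ : Ctx F, (∀ p, p ∈ Γ → p ∈ Δ) → Nonempty (Derives Δ J) := by
  induction d with
  | var hm => exact fun Δ hs => ⟨.var (hs _ hm)⟩
  | flatForm _ ih =>
    intro Δ hs
    obtain ⟨d⟩ := ih _ (divide_sub hs)
    exact ⟨.flatForm d⟩
  | flatIntro _ ih =>
    intro Δ hs
    obtain ⟨d⟩ := ih _ (divide_sub hs)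
    exact ⟨.flatIntro d⟩
  | flatElim _ _ _ _ ih₁ ih₂ ih₃ ih₄ =>
    intro Δ hs
    obtain ⟨d₁⟩ := ih₁ _ (divide_sub hs)
    obtain ⟨d₂⟩ := ih₂ _ (cons_sub hs)
    obtain ⟨d₃⟩ := ih₃ _ (divide_sub hs)
    obtain ⟨d₄⟩ := ih₄ _ (cons_sub hs)
    exact ⟨.flatElim d₁ d₂ d₃ d₄⟩
  | flatBeta _ _ _ _ ih₁ ih₂ ih₃ ih₄ =>
    intro Δ hs
    obtain ⟨d₁⟩ := ih₁ _ (divide_sub hs)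
    obtain ⟨d₂⟩ := ih₂ _ (cons_sub hs)
    obtain ⟨d₃⟩ := ih₃ _ (divide_sub hs)
    obtain ⟨d₄⟩ := ih₄ _ (cons_sub hs)
    exact ⟨.flatBeta d₁ d₂ d₃ d₄⟩
  | sharpForm _ ih =>
    intro Δ hs
    obtain ⟨d⟩ := ih _ (promote_sub hs)
    exact ⟨.sharpForm d⟩
  | sharpIntro _ ih =>
    intro Δ hs
    obtain ⟨d⟩ := ih _ (promote_sub hs)
    exact ⟨.sharpIntro d⟩
  | sharpElim _ ih =>
    intro Δ hs
    obtain ⟨d⟩ := ih _ (divide_sub hs)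
    exact ⟨.sharpElim d⟩
  | sharpBeta _ ih =>
    intro Δ hs
    obtain ⟨d⟩ := ih _ (divide_sub hs)
    exact ⟨.sharpBeta d⟩
  | sharpEta _ ih =>
    intro Δ hs
    obtain ⟨d⟩ := ih _ hs
    exact ⟨.sharpEta d⟩

/-- Promotion for derivations. -/
theorem Derives.promote {Γ : Ctx F} {J : Judg F} (d : Derives Γ J) (h : F) :
    Nonempty (Derives (Ctx.promote h Γ) J) := by
  induction d with
  | var hm => exact ⟨.var (mem_promote hm)⟩
  | flatForm _ ih =>
    obtain ⟨d⟩ := ih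
    obtain ⟨d'⟩ := d.mono _ (promote_divide_sub inf_le_right)
    exact ⟨.flatForm d'⟩
  | flatIntro _ ih =>
    obtain ⟨d⟩ := ih
    obtain ⟨d'⟩ := d.mono _ (promote_divide_sub inf_le_right)
    exact ⟨.flatIntro d'⟩
  | @flatElim Γ k c x u A C M N _ _ _ _ ih₁ ih₂ ih₃ ih₄ =>
    obtain ⟨d₁⟩ := ih₁
    obtain ⟨d₁'⟩ := d₁.mono (Ctx.divide ((h ⊓ c) ⊓ k) (Ctx.promote h Γ))
      (promote_divide_sub (le_of_eq (inf_assoc h c k).symm))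
    obtain ⟨d₂⟩ := ih₂
    obtain ⟨d₃⟩ := ih₃
    obtain ⟨d₃'⟩ := d₃.mono (Ctx.divide (h ⊓ c) (Ctx.promote h Γ))
      (promote_divide_sub le_rfl)
    obtain ⟨d₄⟩ := ih₄
    simp only [Ctx.promote, List.map_cons] at d₂ d₄
    rw [show h ⊓ (c ⊓ k) = (h ⊓ c) ⊓ k from (inf_assoc h c k).symm] at d₄
    exact ⟨.flatElim d₁' d₂ d₃' d₄⟩
  | @flatBeta Γ k c x u A C K N _ _ _ _ ih₁ ih₂ ih₃ ih₄ =>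
    obtain ⟨d₁⟩ := ih₁
    obtain ⟨d₁'⟩ := d₁.mono (Ctx.divide ((h ⊓ c) ⊓ k) (Ctx.promote h Γ))
      (promote_divide_sub (le_of_eq (inf_assoc h c k).symm))
    obtain ⟨d₂⟩ := ih₂
    obtain ⟨d₃⟩ := ih₃
    obtain ⟨d₃'⟩ := d₃.mono (Ctx.divide ((h ⊓ c) ⊓ k) (Ctx.promote h Γ))
      (promote_divide_sub (le_of_eq (inf_assoc h c k).symm))
    obtain ⟨d₄⟩ := ih₄
    simp only [Ctx.promote, List.map_cons] at d₂ d₄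
    rw [show h ⊓ (c ⊓ k) = (h ⊓ c) ⊓ k from (inf_assoc h c k).symm] at d₄
    exact ⟨.flatBeta d₁' d₂ d₃' d₄⟩
  | @sharpForm Γ k A _ ih =>
    obtain ⟨d⟩ := ih
    rw [promote_promote h k Γ] at d
    exact ⟨.sharpForm d⟩
  | @sharpIntro Γ k M A _ ih =>
    obtain ⟨d⟩ := ih
    rw [promote_promote h k Γ] at d
    exact ⟨.sharpIntro d⟩
  | sharpElim _ ih =>
    obtain ⟨d⟩ := ih
    obtain ⟨d'⟩ := d.mono _ (promote_divide_sub inf_le_right)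
    exact ⟨.sharpElim d'⟩
  | sharpBeta _ ih =>
    obtain ⟨d⟩ := ih
    obtain ⟨d'⟩ := d.mono _ (promote_divide_sub inf_le_right)
    exact ⟨.sharpBeta d'⟩
  | sharpEta _ ih =>
    obtain ⟨d⟩ := ih
    exact ⟨.sharpEta d⟩

end Aux

/-- **Promotion is admissible.**
For every focus `♥`: (promote-ctx) if `Γ` is a well-formed context then so is
`♥Γ`, and (promote) if `Γ ⊢ 𝒥` is derivable then `♥Γ ⊢ 𝒥` is derivable. -/
theorem promotion_admissible {F : Type u} [SemilatticeInf F] [OrderTop F]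
    [DecidableRel ((· ≤ ·) : F → F → Prop)] (h : F) :
    (∀ Γ : Ctx F, CtxWF Γ → CtxWF (Ctx.promote h Γ)) ∧
    (∀ (Γ : Ctx F) (J : Judg F),
      Derives Γ J → Nonempty (Derives (Ctx.promote h Γ) J)) := by
  refine ⟨fun Γ hΓ => ?_, fun Γ J d => d.promote h⟩
  induction hΓ with
  | empty => exact .empty
  | @ext Γ x k A _ hd ih =>
    obtain ⟨d⟩ := hd
    obtain ⟨d'⟩ := d.promote h
    obtain ⟨d''⟩ := d'.mono _ (promote_divide_sub (le_refl (h ⊓ k)))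
    exact .ext ih ⟨d''⟩
end

section
/- In the type theory with commuting focuses, division is admissible: for every focus ♥, (divide-ctx) if Γ is a well-formed context then so is ♥\Γ, and (divide-wk) if Γ is a well-formed context and ♥\Γ ⊢ 𝒥 is derivable then Γ ⊢ 𝒥 is derivable. -/
/-!
A deep embedding of the "type theory with commuting focuses".

Focuses are the elements of a meet-semilattice `F` with a top element
(equivalently, a commutative idempotent monoid with `♥♣ = ♥ ⊓ ♣`).
-/

universe u

section Aux

variable {F : Type u} [SemilatticeInf F] [OrderTop F]
  [DecidableRel ((· ≤ ·) : F → F → Prop)]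

lemma Ctx.divide_sublist (h : F) (Γ : Ctx F) : (Ctx.divide h Γ).Sublist Γ :=
  List.filter_sublist

lemma Ctx.divide_sublist_of_sublist (h : F) {Δ Γ : Ctx F} (hs : Δ.Sublist Γ) :
    (Ctx.divide h Δ).Sublist (Ctx.divide h Γ) := hs.filter _

lemma Ctx.promote_sublist_of_sublist (h : F) {Δ Γ : Ctx F} (hs : Δ.Sublist Γ) :
    (Ctx.promote h Δ).Sublist (Ctx.promote h Γ) := hs.map _

/-- Weakening along sublists is admissible. -/
def Derives.weaken : ∀ {Δ Γ : Ctx F} {J : Judg F},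
    Δ.Sublist Γ → Derives Δ J → Derives Γ J
  | _, _, _, hs, .var hmem => .var (hs.subset hmem)
  | _, _, _, hs, .flatForm d =>
      .flatForm (d.weaken (Ctx.divide_sublist_of_sublist _ hs))
  | _, _, _, hs, .flatIntro d =>
      .flatIntro (d.weaken (Ctx.divide_sublist_of_sublist _ hs))
  | _, _, _, hs, .flatElim d₁ d₂ d₃ d₄ =>
      .flatElim (d₁.weaken (Ctx.divide_sublist_of_sublist _ hs))
        (d₂.weaken (hs.cons₂ _))
        (d₃.weaken (Ctx.divide_sublist_of_sublist _ hs))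
        (d₄.weaken (hs.cons₂ _))
  | _, _, _, hs, .flatBeta d₁ d₂ d₃ d₄ =>
      .flatBeta (d₁.weaken (Ctx.divide_sublist_of_sublist _ hs))
        (d₂.weaken (hs.cons₂ _))
        (d₃.weaken (Ctx.divide_sublist_of_sublist _ hs))
        (d₄.weaken (hs.cons₂ _))
  | _, _, _, hs, .sharpForm d =>
      .sharpForm (d.weaken (Ctx.promote_sublist_of_sublist _ hs))
  | _, _, _, hs, .sharpIntro d =>
      .sharpIntro (d.weaken (Ctx.promote_sublist_of_sublist _ hs))
  | _, _, _, hs, .sharpElim d =>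
      .sharpElim (d.weaken (Ctx.divide_sublist_of_sublist _ hs))
  | _, _, _, hs, .sharpBeta d =>
      .sharpBeta (d.weaken (Ctx.divide_sublist_of_sublist _ hs))
  | _, _, _, hs, .sharpEta d => .sharpEta (d.weaken hs)

lemma Ctx.divide_divide (c h : F) (Γ : Ctx F) :
    Ctx.divide c (Ctx.divide h Γ) = Ctx.divide (c ⊓ h) Γ := by
  simp only [Ctx.divide, List.filter_filter]
  congr 1
  funext p
  simp [le_inf_iff, and_comm]

end Aux

/-- **Division is admissible.**
For every focus `♥`: (divide-ctx) if `Γ` is a well-formed context then so is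
`♥\Γ`, and (divide-wk) if `Γ` is a well-formed context and `♥\Γ ⊢ 𝒥` is
derivable then `Γ ⊢ 𝒥` is derivable. -/
theorem division_admissible {F : Type u} [SemilatticeInf F] [OrderTop F]
    [DecidableRel ((· ≤ ·) : F → F → Prop)] (h : F) :
    (∀ Γ : Ctx F, CtxWF Γ → CtxWF (Ctx.divide h Γ)) ∧
    (∀ (Γ : Ctx F) (J : Judg F), CtxWF Γ →
      Derives (Ctx.divide h Γ) J → Nonempty (Derives Γ J)) := by
  constructor
  · intro Γ hΓ
    induction hΓ with
    | empty => exact CtxWF.empty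
    | @ext Γ x c A _ hA ih =>
      by_cases hc : c ≤ h
      · have hdiv : Ctx.divide h ((x, c, A) :: Γ) = (x, c, A) :: Ctx.divide h Γ := by
          simp [Ctx.divide, hc]
        rw [hdiv]
        refine CtxWF.ext ih ?_
        rw [Ctx.divide_divide, inf_eq_left.mpr hc]
        exact hA
      · have hdiv : Ctx.divide h ((x, c, A) :: Γ) = Ctx.divide h Γ := by
          simp [Ctx.divide, hc]
        rw [hdiv]
        exact ih
  · intro Γ J _ d
    exact ⟨d.weaken (Ctx.divide_sublist h Γ)⟩
end

section
/- In the category SSet of simplicial sets, for every natural number n the standard n-simplex Δ[n] is a retract of the n-fold categorical product Δ[1] × ⋯ × Δ[1]: there exist morphisms of simplicial sets i : Δ[n] ⟶ (Δ[1])^n and r : (Δ[1])^n ⟶ Δ[n] with i ≫ r = 𝟙 (Δ[n]). -/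
open CategoryTheory Simplicial Limits

namespace RetractAux

open SSet SimplexCategory Finset

variable (n : ℕ)

lemma card_filter_lt {n : ℕ} (c : ℕ) (h : c ≤ n) :
    ((Finset.univ : Finset (Fin n)).filter fun j : Fin n => (j : ℕ) < c).card = c := by
  have he : ((Finset.univ : Finset (Fin n)).filter fun j : Fin n => (j : ℕ) < c) =
      Finset.attachFin (Finset.range c)
        (fun m hm => lt_of_lt_of_le (Finset.mem_range.mp hm) h) := by
    ext j
    simp [Finset.mem_attachFin]
  rw [he, Finset.card_attachFin, Finset.card_range]

/-- The explicit `n`-cube. -/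
def cube : SSet where
  obj m := ∀ _ : Fin n, Δ[1].obj m
  map φ := TypeCat.ofHom fun g j => Δ[1].map φ (g j)
  map_id m := by ext g j; exact Δ[1].map_id_apply m (g j)
  map_comp φ ψ := by ext g j; exact Δ[1].map_comp_apply φ ψ (g j)

/-- The fan exhibiting `cube n` as a product of copies of `Δ[1]`. -/
def cubeFan : Fan (fun _ : Fin n => Δ[1]) :=
  Fan.mk (cube n) (fun j => { app := fun m => TypeCat.ofHom fun g => g j })

/-- The fan is limiting. -/
def cubeFanIsLimit : IsLimit (cubeFan n) :=
  mkFanLimit _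
    (fun s =>
      { app := fun m => TypeCat.ofHom fun y j => (s.proj j).app m y
        naturality := fun m m' φ => by
          ext y; funext j
          exact types_congr_hom ((s.proj j).naturality φ) y })
    (fun s j => rfl)
    (fun s m h => by
      ext k y
      funext j
      exact types_congr_hom (NatTrans.congr_app (h j) k) y)

/-- The `j`-th coordinate inclusion `Δ[n] ⟶ Δ[1]`. -/
def ι (j : Fin n) : Δ[n] ⟶ Δ[1] :=
  SSet.stdSimplex.map (SimplexCategory.mkHom
    { toFun := fun k => if (k : ℕ) ≤ (j : ℕ) then 0 else 1
      monotone' := by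
        intro a b hab
        dsimp
        split_ifs with h1 h2 h3
        · exact le_refl _
        · exact Fin.zero_le _
        · exact absurd (le_trans (by exact_mod_cast hab) h3) h1
        · exact le_refl _ })

/-- The retraction `cube n ⟶ Δ[n]`. -/
def retr : cube n ⟶ Δ[n] where
  app m := TypeCat.ofHom fun g => stdSimplex.objMk
    { toFun := fun a => ⟨((Finset.univ : Finset (Fin n)).filter fun j =>
          ((stdSimplex.objEquiv (g j)).toOrderHom a : Fin 2) = 1).card,
        Nat.lt_succ_of_le (le_trans (Finset.card_filter_le _ _) (by simp))⟩
      monotone' := by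
        intro a b hab
        simp only [Fin.mk_le_mk]
        apply Finset.card_le_card
        intro j hj
        rw [Finset.mem_filter] at hj ⊢
        refine ⟨hj.1, ?_⟩
        obtain ⟨-, hj⟩ := hj
        have hm := (stdSimplex.objEquiv (g j)).toOrderHom.monotone hab
        rw [hj] at hm
        exact le_antisymm (Fin.le_last _) hm }
  naturality m m' φ := by
    ext g
    rfl

/-- The explicit lift `Δ[n] ⟶ cube n`. -/
def lift' : Δ[n] ⟶ cube n where
  app m := TypeCat.ofHom fun x j => (ι n j).app m x
  naturality m m' φ := by
    ext x; funext j
    exact types_congr_hom ((ι n j).naturality φ) x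

lemma lift'_retr : lift' n ≫ retr n = 𝟙 Δ[n] := by
  ext m x
  apply stdSimplex.objEquiv.injective
  apply SimplexCategory.Hom.ext
  ext a
  set c := (stdSimplex.objEquiv x).toOrderHom a with hc
  show ((Finset.univ : Finset (Fin n)).filter fun j : Fin n =>
      (if (c : ℕ) ≤ (j : ℕ) then (0 : Fin 2) else 1) = 1).card = (c : ℕ)
  have hiff : ∀ j : Fin n,
      ((if (c : ℕ) ≤ (j : ℕ) then (0 : Fin 2) else 1) = 1) ↔ ((j : ℕ) < (c : ℕ)) := by
    intro j
    split_ifs with h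
    · constructor
      · intro h0; exact absurd h0 (by decide)
      · omega
    · simp only [true_iff]
      omega
  rw [Finset.filter_congr (fun j _ => hiff j)]
  exact card_filter_lt _ (Nat.lt_succ_iff.mp c.isLt)

end RetractAux

/-- In the category `SSet` of simplicial sets, the standard
`n`-simplex `Δ[n]` is a retract of the `n`-fold categorical product
`Δ[1] × ⋯ × Δ[1]`: there are morphisms `i : Δ[n] ⟶ (Δ[1])^n` and
`r : (Δ[1])^n ⟶ Δ[n]` with `i ≫ r = 𝟙 Δ[n]`. -/
theorem standardSimplex_retract_of_cube (n : ℕ) :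
    ∃ (i : Δ[n] ⟶ ∏ᶜ (fun _ : Fin n => Δ[1]))
      (r : (∏ᶜ (fun _ : Fin n => Δ[1])) ⟶ Δ[n]),
      i ≫ r = 𝟙 Δ[n] := by
  refine ⟨Pi.lift (fun j => RetractAux.ι n j),
    (limit.isoLimitCone ⟨RetractAux.cubeFan n, RetractAux.cubeFanIsLimit n⟩).hom ≫
      RetractAux.retr n, ?_⟩
  refine (Category.assoc _ _ _).symm.trans ?_
  have h1 : Pi.lift (fun j => RetractAux.ι n j) ≫
      (limit.isoLimitCone ⟨RetractAux.cubeFan n, RetractAux.cubeFanIsLimit n⟩).hom =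
      RetractAux.lift' n := by
    apply (RetractAux.cubeFanIsLimit n).hom_ext
    rintro ⟨j⟩
    rw [Category.assoc]
    erw [limit.isoLimitCone_hom_π]
    exact limit.lift_π _ _
  rw [h1]
  exact RetractAux.lift'_retr n
end

section
/- For natural numbers n and m and a monotone map f : Fin (n+1) → Fin (m+1), define ι f : Fin (m+2) → Fin (n+2) by: ι f (i) is the least j with (j : ℕ) ≤ n such that (i : ℕ) ≤ (f j : ℕ), if such a j exists, and ι f (i) = n+1 otherwise. Then: (1) ι f is monotone, ι f 0 = 0, and ι f (m+1) = n+1; (2) the assignment f ↦ ι f is a bijection from the set of monotone maps Fin (n+1) → Fin (m+1) onto the set of monotone maps g : Fin (m+2) → Fin (n+2) satisfying g 0 = 0 and g (m+1) = n+1; (3) ι is contravariantly functorial: ι(id) = id, and for monotone f : Fin (n+1) → Fin (m+1) and g : Fin (m+1) → Fin (k+1), one has ι(g ∘ f) = ι f ∘ ι g. -/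
/-- The interval map `ι f : [m+1] → [n+1]` associated contravariantly to a map
`f : [n] → [m]` of finite ordinals: `ι f i` is the least `j` with `i ≤ f j`
if one exists, and `n+1` otherwise. -/
def iotaMap {n m : ℕ} (f : Fin (n + 1) → Fin (m + 1)) (i : Fin (m + 2)) :
    Fin (n + 2) :=
  if h : ∃ j : Fin (n + 1), (i : ℕ) ≤ (f j : ℕ) then
    (Fin.find (fun j : Fin (n + 1) => (i : ℕ) ≤ (f j : ℕ)) h).castSucc
  else Fin.last (n + 1)

private lemma fin_eq_of_forall {N : ℕ} {x y : Fin (N + 2)}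
    (h : ∀ j : Fin (N + 1), x ≤ j.castSucc ↔ y ≤ j.castSucc) : x = y := by
  by_contra hne
  rcases lt_or_gt_of_ne hne with hlt | hlt
  · have hxlast : x < Fin.last (N + 1) := lt_of_lt_of_le hlt (Fin.le_last y)
    have hx : x ≤ (x.castPred hxlast.ne).castSucc := by
      rw [Fin.castSucc_castPred]
    have := (h (x.castPred hxlast.ne)).1 hx
    rw [Fin.castSucc_castPred] at this
    exact absurd this (not_le.2 hlt)
  · have hylast : y < Fin.last (N + 1) := lt_of_lt_of_le hlt (Fin.le_last x)
    have hy : y ≤ (y.castPred hylast.ne).castSucc := by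
      rw [Fin.castSucc_castPred]
    have := (h (y.castPred hylast.ne)).2 hy
    rw [Fin.castSucc_castPred] at this
    exact absurd this (not_le.2 hlt)

private lemma iota_galois {n m : ℕ} {f : Fin (n + 1) → Fin (m + 1)} (hf : Monotone f)
    (i : Fin (m + 2)) (j : Fin (n + 1)) :
    iotaMap f i ≤ j.castSucc ↔ (i : ℕ) ≤ (f j : ℕ) := by
  unfold iotaMap
  by_cases hex : ∃ j : Fin (n + 1), (i : ℕ) ≤ (f j : ℕ)
  · rw [dif_pos hex, Fin.castSucc_le_castSucc_iff]
    constructor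
    · intro h
      exact le_trans (Fin.find_spec hex) (hf h)
    · intro h
      exact Fin.find_le h
  · rw [dif_neg hex]
    constructor
    · intro h
      exact absurd h (not_le.2 (Fin.castSucc_lt_last j))
    · intro h
      exact absurd ⟨j, h⟩ hex

private lemma iota_mono {n m : ℕ} {f : Fin (n + 1) → Fin (m + 1)} (hf : Monotone f) :
    Monotone (iotaMap f) := by
  intro i i' hii
  rcases eq_or_lt_of_le (Fin.le_last (iotaMap f i')) with hl | hl
  · rw [hl]; exact Fin.le_last _
  · have h2 : iotaMap f i' ≤ ((iotaMap f i').castPred hl.ne).castSucc := by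
      rw [Fin.castSucc_castPred]
    have h3 := (iota_galois hf i' _).1 h2
    have h4 : (i : ℕ) ≤ (f ((iotaMap f i').castPred hl.ne) : ℕ) :=
      le_trans hii h3
    have := (iota_galois hf i _).2 h4
    rwa [Fin.castSucc_castPred] at this

/-- (1) For monotone `f : Fin (n+1) → Fin (m+1)`, `ι f` is a
monotone map `Fin (m+2) → Fin (n+2)` preserving bottom and top; (2) `f ↦ ι f`
is a bijection from monotone maps `Fin (n+1) → Fin (m+1)` onto monotone maps
`g : Fin (m+2) → Fin (n+2)` with `g 0 = 0` and `g (m+1) = n+1`;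
(3) `ι` is contravariantly functorial: `ι(id) = id` and `ι(g ∘ f) = ι f ∘ ι g`. -/
theorem iotaMap_interval_equivalence :
    (∀ (n m : ℕ) (f : Fin (n + 1) → Fin (m + 1)), Monotone f →
      Monotone (iotaMap f) ∧ iotaMap f 0 = 0 ∧
        iotaMap f (Fin.last (m + 1)) = Fin.last (n + 1)) ∧
    (∀ (n m : ℕ) (f g : Fin (n + 1) → Fin (m + 1)), Monotone f → Monotone g →
      iotaMap f = iotaMap g → f = g) ∧
    (∀ (n m : ℕ) (g : Fin (m + 2) → Fin (n + 2)), Monotone g →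
      g 0 = 0 → g (Fin.last (m + 1)) = Fin.last (n + 1) →
      ∃ f : Fin (n + 1) → Fin (m + 1), Monotone f ∧ iotaMap f = g) ∧
    (∀ n : ℕ, iotaMap (id : Fin (n + 1) → Fin (n + 1)) = id) ∧
    (∀ (n m k : ℕ) (f : Fin (n + 1) → Fin (m + 1))
      (g : Fin (m + 1) → Fin (k + 1)), Monotone f → Monotone g →
      iotaMap (g ∘ f) = iotaMap f ∘ iotaMap g) := by
  refine ⟨?_, ?_, ?_, ?_, ?_⟩
  · -- (1) monotone, preserves bottom and top
    intro n m f hf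
    refine ⟨iota_mono hf, ?_, ?_⟩
    · have h0 : iotaMap f 0 ≤ (0 : Fin (n + 1)).castSucc :=
        (iota_galois hf 0 0).2 (by simp)
      have : (0 : Fin (n + 1)).castSucc = (0 : Fin (n + 2)) := by
        ext; simp
      rw [this] at h0
      exact le_antisymm h0 (Fin.zero_le _)
    · unfold iotaMap
      have hfind : ¬ ∃ j : Fin (n + 1),
          ((Fin.last (m + 1) : Fin (m + 2)) : ℕ) ≤ (f j : ℕ) := by
        rintro ⟨j, hj⟩
        simp only [Fin.val_last] at hj
        exact absurd (f j).is_lt (not_lt.2 hj)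
      rw [dif_neg hfind]
  · -- (2a) injectivity
    intro n m f g hf hg hfg
    funext j
    have key : ∀ (f g : Fin (n + 1) → Fin (m + 1)), Monotone f → Monotone g →
        iotaMap f = iotaMap g → (f j : ℕ) ≤ (g j : ℕ) := by
      intro f g hf hg hfg
      have h1 : iotaMap f ((f j).castSucc) ≤ j.castSucc :=
        (iota_galois hf _ j).2 (by simp)
      rw [hfg] at h1
      have h2 := (iota_galois hg ((f j).castSucc) j).1 h1
      simpa using h2
    exact Fin.ext (le_antisymm (key f g hf hg hfg) (key g f hg hf hfg.symm))
  · -- (2b) surjectivity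
    intro n m g hg hg0 hglast
    -- f j := greatest i with g i.castSucc ≤ j.castSucc
    have hsome : ∀ j : Fin (n + 1),
        ∃ k : Fin (m + 1), g k.rev.castSucc ≤ j.castSucc ∧
          ∀ i, g i.rev.castSucc ≤ j.castSucc → k ≤ i := by
      intro j
      have : ∃ i : Fin (m + 1), g i.rev.castSucc ≤ j.castSucc := by
        refine ⟨Fin.last m, ?_⟩
        have : (Fin.last m).rev = 0 := by ext; simp
        rw [this]
        have : ((0 : Fin (m + 1)).castSucc) = (0 : Fin (m + 2)) := by ext; simp
        rw [this, hg0]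
        exact Fin.zero_le _
      exact ⟨Fin.find _ this, Fin.find_spec this, fun i hi => Fin.find_le (p := fun k : Fin (m + 1) => g k.rev.castSucc ≤ j.castSucc) hi⟩
    choose k hk using hsome
    set f : Fin (n + 1) → Fin (m + 1) := fun j => (k j).rev with hfdef
    have hprop : ∀ j, g ((f j).castSucc) ≤ j.castSucc ∧
        ∀ i₀ : Fin (m + 1), g i₀.castSucc ≤ j.castSucc → i₀ ≤ f j := by
      intro j
      have h := hk j
      constructor
      · exact h.1
      · intro i₀ hi₀
        have : k j ≤ i₀.rev := h.2 i₀.rev (by rwa [Fin.rev_rev])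
        have := Fin.rev_le_rev.2 this
        rwa [Fin.rev_rev] at this
    have hclaim : ∀ (i : Fin (m + 2)) (j : Fin (n + 1)),
        g i ≤ j.castSucc ↔ (i : ℕ) ≤ (f j : ℕ) := by
      intro i j
      constructor
      · intro h
        have hine : i ≠ Fin.last (m + 1) := by
          intro e
          rw [e, hglast] at h
          exact absurd h (not_le.2 (Fin.castSucc_lt_last j))
        have hi : i < Fin.last (m + 1) := (Fin.le_last i).lt_of_ne hine
        have := (hprop j).2 (i.castPred hi.ne) (by rwa [Fin.castSucc_castPred])
        simpa [Fin.le_def] using this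
      · intro h
        have hival : (i : ℕ) < m + 1 := lt_of_le_of_lt h (f j).is_lt
        have hine : i ≠ Fin.last (m + 1) := by
          intro e; rw [e] at hival; simp at hival
        have h1 : (i.castPred hine).castSucc ≤ (f j).castSucc := by
          simp [Fin.le_def]
          simpa [Fin.le_def] using h
        calc g i = g ((i.castPred hine).castSucc) := by rw [Fin.castSucc_castPred]
          _ ≤ g ((f j).castSucc) := hg h1
          _ ≤ j.castSucc := (hprop j).1
    have hfmono : Monotone f := by
      intro j j' hjj
      exact (hprop j').2 (f j) (le_trans (hprop j).1 (Fin.castSucc_le_castSucc_iff.2 hjj))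
    refine ⟨f, hfmono, ?_⟩
    funext i
    apply fin_eq_of_forall
    intro j
    rw [iota_galois hfmono, hclaim]
  · -- (3a) identity
    intro n
    funext i
    apply fin_eq_of_forall
    intro j
    rw [iota_galois monotone_id]
    simp [Fin.le_def]
  · -- (3b) composition
    intro n m k f g hf hg
    funext i
    apply fin_eq_of_forall
    intro j
    rw [iota_galois (hg.comp hf) i j]
    show _ ↔ iotaMap f (iotaMap g i) ≤ j.castSucc
    rw [iota_galois hf (iotaMap g i) j]
    have : ((iotaMap g i : Fin (m + 2)) : ℕ) ≤ (f j : ℕ) ↔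
        iotaMap g i ≤ (f j).castSucc := by simp [Fin.le_def]
    rw [this, iota_galois hg i (f j)]
    rfl
end
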